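/- arXiv:2203.09340 — 3 statements merged into one kernel-verified Lean document; each statement's English description precedes it below -/
import Mathlib

section
/- Let a and a-valid sequences be as above. Order a-valid sequences so that shorter sequences precede longer ones and sequences of equal length are ordered lexicographically; the a-Zeckendorf representation of N is the N-th sequence in this order. Then for every positive integer N, if t is the unique integer with a_t ≤ N < a_{t+1}, the a-Zeckendorf representation of N has exactly t+1 digits. -/
/-- `Λ_j = λ₁ + ⋯ + λ_j`. -/
def Lam (lam : ℕ → ℕ) (j : ℕ) : ℕ := ∑ i ∈ Finset.Icc 1 j, lam i

/-- `μ_ℓ` is the minimum index `j` with `Λ_j > ℓ`. -/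
noncomputable def mu (lam : ℕ → ℕ) (ℓ : ℕ) : ℕ := sInf {j : ℕ | ℓ < Lam lam j}

/-- An `a`-valid digit sequence, as a list `[d_0, d_1, …, d_M]`
(least significant digit first). -/
def AValid (lam : ℕ → ℕ) (k : ℕ) (l : List ℕ) : Prop :=
  l ≠ [] ∧ (∀ x ∈ l, x < Lam lam k) ∧ l.getLast? ≠ some 0 ∧
  ∀ i j : ℕ, i < j → j < i + mu lam (l.getD i 0) → j < l.length → l.getD j 0 = 0

/-- The ordering on digit sequences: shorter sequences come first, and
sequences of equal length are compared lexicographically (reading from the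
most significant digit, which is the last entry of our lists). -/
def ZOrd (l₁ l₂ : List ℕ) : Prop :=
  l₁.length < l₂.length ∨
    (l₁.length = l₂.length ∧ List.Lex (· < ·) l₁.reverse l₂.reverse)

/-!
Pad each `a`-valid sequence of at most `t` digits with leading zeros to exactly `t` digits.
These words, together with the all-zero word, are exactly the words of length `t` satisfying the
gap condition. Splitting off the lowest digit `d` together with the `μ_d - 1` zeros it forces, and
using that exactly `λ_j` digits have `μ_d = j`, shows that there are `Σ λ_j a_{t-j} = a_t` such
words.
So there are `a_t - 1` valid sequences of at most `t` digits. The predecessors of a valid sequence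
of length `L` include every valid sequence with fewer digits but not the sequence itself, whence
`a_{L-1} ≤ N < a_L`, and monotonicity of `a` forces `L = t + 1`.
-/

open Finset

section LamMu

variable {lam : ℕ → ℕ} {k d : ℕ}

lemma Lam_succ (j : ℕ) : Lam lam (j + 1) = Lam lam j + lam (j + 1) :=
  sum_Icc_succ_top (by omega) _

lemma Lam_mono : Monotone (Lam lam) := fun _ _ hij =>
  sum_le_sum_of_subset (Icc_subset_Icc le_rfl hij)

lemma mu_eq_succ_iff (j : ℕ) : mu lam d = j + 1 ↔ Lam lam j ≤ d ∧ d < Lam lam (j + 1) := by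
  rw [mu, Nat.sInf_upward_closed_eq_succ_iff (s := {j | d < Lam lam j})
    (fun _ _ h hd => lt_of_lt_of_le hd (Lam_mono h)) j]
  simp only [Set.mem_ofPred_eq, not_lt, and_comm]

lemma mu_le (hd : d < Lam lam k) : mu lam d ≤ k := Nat.sInf_le hd

lemma mu_pos (hd : d < Lam lam k) : 0 < mu lam d := by
  refine Nat.pos_of_ne_zero fun h => ?_
  have : d < Lam lam (mu lam d) := Nat.sInf_mem (s := {j | d < Lam lam j}) ⟨k, hd⟩
  simp [h, Lam] at this

lemma mu_zero (h1 : 0 < lam 1) : mu lam 0 = 1 :=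
  (mu_eq_succ_iff 0).2 ⟨Nat.zero_le _, by simpa [Lam] using h1⟩

lemma card_filter_mu_eq {j : ℕ} (hj : j ∈ Icc 1 k) :
    #{d ∈ range (Lam lam k) | mu lam d = j} = lam j := by
  obtain ⟨i, rfl⟩ : ∃ i, j = i + 1 := ⟨j - 1, by grind⟩
  have hfib :
      {d ∈ range (Lam lam k) | mu lam d = i + 1} = Ico (Lam lam i) (Lam lam (i + 1)) := by
    ext d
    have : Lam lam (i + 1) ≤ Lam lam k := Lam_mono (mem_Icc.1 hj).2
    simp only [mem_filter, mem_range, mem_Ico, mu_eq_succ_iff]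
    omega
  rw [hfib, Nat.card_Ico, Lam_succ]
  omega

end LamMu

/-- The last clause of `AValid` without its bound `j < l.length`, which is vacuous because `getD`
reads `0` past the end of the list. -/
def GapCondition (lam : ℕ → ℕ) (l : List ℕ) : Prop :=
  ∀ i j : ℕ, i < j → j < i + mu lam (l.getD i 0) → l.getD j 0 = 0

section GapCondition

variable {lam : ℕ → ℕ} {k : ℕ}

lemma aValid_iff {l : List ℕ} : AValid lam k l ↔
    l ≠ [] ∧ (∀ x ∈ l, x < Lam lam k) ∧ l.getLast? ≠ some 0 ∧ GapCondition lam l := by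
  refine and_congr_right' <| and_congr_right' <| and_congr_right' <|
    forall₄_congr fun i j _ _ => ⟨fun h => ?_, fun h _ => h⟩
  by_cases hj : j < l.length
  · exact h hj
  · exact List.getD_eq_default _ _ (not_lt.1 hj)

lemma forall_mem_take_eq_zero_iff {t : List ℕ} {s : ℕ} :
    (∀ x ∈ t.take s, x = 0) ↔ ∀ j < s, t.getD j 0 = 0 := by
  constructor
  · intro h j hj
    by_cases hjt : j < t.length
    · rw [List.getD_eq_getElem _ _ hjt]
      exact h _ (List.mem_iff_getElem.2 ⟨j, by simp; omega, List.getElem_take⟩)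
    · exact List.getD_eq_default _ _ (not_lt.1 hjt)
  · intro h x hx
    obtain ⟨j, hj, rfl⟩ := List.getElem_of_mem hx
    rw [List.length_take] at hj
    rw [List.getElem_take, ← List.getD_eq_getElem t 0]
    exact h j (by omega)

lemma gapCondition_cons {d : ℕ} {t : List ℕ} :
    GapCondition lam (d :: t) ↔
      (∀ x ∈ t.take (mu lam d - 1), x = 0) ∧ GapCondition lam t := by
  rw [forall_mem_take_eq_zero_iff]
  constructor
  · intro h
    exact ⟨fun j hj => h 0 (j + 1) (by omega) (by simp; omega),
      fun i j hij hj => h (i + 1) (j + 1) (by omega) (by simp at hj ⊢; omega)⟩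
  · rintro ⟨hzero, h⟩ (_ | i) (_ | j) hij hj
    · omega
    · exact hzero j (by simp at hj; omega)
    · omega
    · exact h i j (by omega) (by simp at hj ⊢; omega)

lemma gapCondition_zero_cons (h1 : 1 ≤ lam 1) {t : List ℕ} :
    GapCondition lam (0 :: t) ↔ GapCondition lam t := by
  simp [gapCondition_cons, mu_zero h1]

lemma gapCondition_replicate_append (h1 : 1 ≤ lam 1) (r : ℕ) {t : List ℕ} :
    GapCondition lam (List.replicate r 0 ++ t) ↔ GapCondition lam t := by
  induction r with
  | zero => rfl
  | succ r ih => rw [List.replicate_succ, List.cons_append, gapCondition_zero_cons h1, ih]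

lemma gapCondition_append_replicate (r : ℕ) {l : List ℕ} :
    GapCondition lam (l ++ List.replicate r 0) ↔ GapCondition lam l := by
  have h : ∀ i, (l ++ List.replicate r 0).getD i 0 = l.getD i 0 := by
    simp only [List.getD_eq_getElem?_getD]
    grind
  simp only [GapCondition, h]

end GapCondition

open Classical in
noncomputable def gapWords {lam : ℕ → ℕ} {k : ℕ} (hΛ : 1 < Lam lam k) (m : ℕ) :
    Finset (List ℕ) :=
  {l ∈ List.fixedLengthDigits hΛ m | GapCondition lam l}

section GapWords

variable {lam : ℕ → ℕ} {k : ℕ} (hΛ : 1 < Lam lam k)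

lemma mem_gapWords {m : ℕ} {l : List ℕ} : l ∈ gapWords hΛ m ↔
    l.length = m ∧ (∀ x ∈ l, x < Lam lam k) ∧ GapCondition lam l := by
  simp [gapWords, List.mem_fixedLengthDigits_iff, and_assoc]

lemma gapWords_zero : gapWords hΛ 0 = {[]} := by
  ext l
  simp only [mem_gapWords, List.length_eq_zero_iff, mem_singleton]
  constructor
  · exact fun h => h.1
  · rintro rfl
    exact ⟨rfl, by simp, fun i j _ _ => by simp⟩

lemma take_leftpad_eq_replicate {m s : ℕ} {w : List ℕ} (hw : w.length = m - s) :
    (w.leftpad m 0).take s = List.replicate (min s m) 0 := by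
  rw [List.leftpad, hw, List.take_append, List.take_replicate, List.length_replicate]
  rcases le_total s m with h | h
  · simp [Nat.sub_sub_self h, h]
  · simp [List.eq_nil_of_length_eq_zero (hw.trans (Nat.sub_eq_zero_of_le h)), h]

/-- A word of length `m + 1` is its lowest digit `d`, followed by the `μ_d - 1` zeros the gap
condition forces (truncated at the end of the word), followed by a shorter word. -/
lemma gapWords_succ (h1 : 1 ≤ lam 1) (m : ℕ) :
    gapWords hΛ (m + 1) = (range (Lam lam k)).biUnion fun d =>
      (gapWords hΛ (m + 1 - mu lam d)).image fun w => d :: w.leftpad m 0 := by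
  ext l
  simp only [mem_biUnion, mem_range, mem_image, mem_gapWords]
  constructor
  · rintro ⟨hlen, hlt, hgap⟩
    cases l with
    | nil => simp at hlen
    | cons d t =>
      obtain ⟨hzero, hgap⟩ := gapCondition_cons.1 hgap
      have hd : d < Lam lam k := hlt d List.mem_cons_self
      have htlen : t.length = m := by simpa using hlen
      have hmu := mu_pos hd
      have ht : t = List.replicate (min (mu lam d - 1) m) 0 ++ t.drop (mu lam d - 1) := by
        have : t.take (mu lam d - 1) = List.replicate (min (mu lam d - 1) m) 0 :=
          List.eq_replicate_iff.2 ⟨by simp [htlen], hzero⟩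
        rw [← this, List.take_append_drop]
      refine ⟨d, hd, t.drop (mu lam d - 1), ⟨by simp [htlen]; omega,
        fun x hx => hlt x (List.mem_cons_of_mem _ (List.mem_of_mem_drop hx)), ?_⟩, ?_⟩
      · rwa [ht, gapCondition_replicate_append h1] at hgap
      · conv_rhs => rw [ht]
        rw [List.leftpad, List.length_drop, htlen]
        congr 3
        omega
  · rintro ⟨d, hd, w, ⟨hwlen, hwlt, hwgap⟩, rfl⟩
    have hmu := mu_pos hd
    refine ⟨by simp; omega, ?_, ?_⟩
    · simp only [List.leftpad, List.mem_cons, List.mem_append, List.mem_replicate]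
      rintro x (rfl | ⟨-, rfl⟩ | hx)
      exacts [hd, by omega, hwlt x hx]
    · rw [gapCondition_cons, take_leftpad_eq_replicate (by omega), List.leftpad,
        gapCondition_replicate_append h1]
      exact ⟨fun x hx => List.eq_of_mem_replicate hx, hwgap⟩

lemma card_gapWords_succ (h1 : 1 ≤ lam 1) (m : ℕ) :
    #(gapWords hΛ (m + 1)) = ∑ j ∈ Icc 1 k, lam j * #(gapWords hΛ (m + 1 - j)) := by
  rw [gapWords_succ hΛ h1, card_biUnion]
  · have hinj (d : ℕ) : Set.InjOn (fun w : List ℕ => d :: w.leftpad m 0)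
        (gapWords hΛ (m + 1 - mu lam d)) := by
      intro w₁ hw₁ w₂ hw₂ h
      have hlen : w₁.length = w₂.length := by
        rw [(mem_gapWords hΛ).1 hw₁ |>.1, (mem_gapWords hΛ).1 hw₂ |>.1]
      simpa [List.leftpad, hlen] using h
    simp_rw [card_image_of_injOn (hinj _)]
    rw [← sum_fiberwise_of_maps_to (g := mu lam) (t := Icc 1 k)
      fun d hd => mem_Icc.2 ⟨mu_pos (mem_range.1 hd), mu_le (mem_range.1 hd)⟩]
    refine sum_congr rfl fun j hj => ?_
    rw [sum_congr rfl fun d hd => by rw [(mem_filter.1 hd).2], sum_const,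
      card_filter_mu_eq hj, smul_eq_mul]
  · intro d₁ _ d₂ _ hne
    simp only [Function.onFun, disjoint_left, mem_image]
    rintro _ ⟨w₁, -, rfl⟩ ⟨w₂, -, h⟩
    exact hne (List.cons.inj h).1.symm

lemma card_gapWords (h1 : 1 ≤ lam 1) {a : ℤ → ℤ} (ha0 : ∀ i : ℤ, i ≤ 0 → a i = 1)
    (harec : ∀ n : ℤ, 1 ≤ n → a n = ∑ i ∈ Icc 1 k, (lam i : ℤ) * a (n - i))
    (m : ℕ) :
    (#(gapWords hΛ m) : ℤ) = a m := by
  induction m using Nat.strong_induction_on with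
  | _ m ih =>
    rcases m with _ | m
    · simp [gapWords_zero, ha0]
    rw [card_gapWords_succ hΛ h1, harec _ (by omega)]
    push_cast
    refine sum_congr rfl fun j hj => ?_
    have hj1 := (mem_Icc.1 hj).1
    rw [ih _ (by omega)]
    by_cases hjm : j ≤ m + 1
    · push_cast [hjm]
      ring_nf
    · rw [ha0 _ (by omega), ha0 _ (by omega)]

end GapWords

def validUpTo (lam : ℕ → ℕ) (k t : ℕ) : Set (List ℕ) :=
  {l | AValid lam k l ∧ l.length ≤ t}

section ValidUpTo

variable {lam : ℕ → ℕ} {k : ℕ}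

lemma mem_validUpTo {t : ℕ} {l : List ℕ} :
    l ∈ validUpTo lam k t ↔ AValid lam k l ∧ l.length ≤ t := Iff.rfl

lemma validUpTo_mono : Monotone (validUpTo lam k) := fun _ _ hst _ hl =>
  mem_validUpTo.2 ⟨(mem_validUpTo.1 hl).1, (mem_validUpTo.1 hl).2.trans hst⟩

lemma rdropWhile_append_replicate_zero {l : List ℕ} (hl : l.getLast? ≠ some 0) (r : ℕ) :
    (l ++ List.replicate r 0).rdropWhile (· == 0) = l := by
  induction r with
  | zero =>
    simp only [List.replicate_zero, List.append_nil, List.rdropWhile_eq_self_iff]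
    intro hne
    simpa [List.getLast?_eq_some_getLast hne] using hl
  | succ r ih =>
    rwa [List.replicate_succ', ← List.append_assoc, List.rdropWhile_concat_pos _ _ _ (by simp)]

lemma injOn_rightpad (t : ℕ) : Set.InjOn (List.rightpad t 0) {l | AValid lam k l} :=
  fun l₁ h₁ l₂ h₂ h => by
    rw [← rdropWhile_append_replicate_zero h₁.2.2.1 (t - l₁.length),
      ← rdropWhile_append_replicate_zero h₂.2.2.1 (t - l₂.length)]
    exact congrArg _ h

lemma replicate_notMem_image_rightpad (t : ℕ) :
    List.replicate t 0 ∉ List.rightpad t 0 '' validUpTo lam k t := by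
  rintro ⟨l, ⟨hl, -⟩, h⟩
  have hlast : l.getLast hl.1 ∈ List.replicate t 0 :=
    h ▸ List.mem_append_left _ (List.getLast_mem hl.1)
  exact hl.2.2.1 (by rw [List.getLast?_eq_some_getLast hl.1, List.eq_of_mem_replicate hlast])

/-- Stripping the leading zeros of a word (trailing in our lists) recovers an `a`-valid sequence,
unless the word is all zeros. -/
lemma coe_gapWords (hΛ : 1 < Lam lam k) (h1 : 1 ≤ lam 1) (t : ℕ) :
    (gapWords hΛ t : Set (List ℕ)) =
      insert (List.replicate t 0) (List.rightpad t 0 '' validUpTo lam k t) := by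
  ext w
  simp only [mem_coe, mem_gapWords, Set.mem_insert_iff, Set.mem_image, mem_validUpTo]
  constructor
  · rintro ⟨rfl, hlt, hgap⟩
    have hsplit := List.rdropWhile_append_rtakeWhile (p := (· == 0)) (l := w)
    set l := w.rdropWhile (· == 0)
    have hw : w = l ++ List.replicate (w.length - l.length) 0 := by
      have hlen := congrArg List.length hsplit
      rw [List.length_append] at hlen
      have hzeros : w.rtakeWhile (· == 0) = List.replicate (w.length - l.length) 0 :=
        List.eq_replicate_iff.2
          ⟨by omega, fun x hx => by simpa using List.mem_rtakeWhile_imp hx⟩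
      rw [← hzeros, hsplit]
    by_cases hl : l = []
    · left
      rw [hw, hl]
      simp
    · right
      have hlast : l.getLast? ≠ some 0 := by
        simpa [List.getLast?_eq_some_getLast hl] using List.rdropWhile_last_not _ _ hl
      have hprefix := List.rdropWhile_prefix (· == 0) w
      refine ⟨l, ⟨aValid_iff.2 ⟨hl, fun x hx => hlt x (hprefix.subset hx), hlast, ?_⟩,
        hprefix.length_le⟩, ?_⟩
      · rwa [hw, gapCondition_append_replicate] at hgap
      · exact hw.symm
  · rintro (rfl | ⟨l, ⟨hl, hlen⟩, rfl⟩)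
    · refine ⟨by simp, fun x hx => (List.eq_of_mem_replicate hx).trans_lt (by omega), ?_⟩
      rw [← List.append_nil (List.replicate t 0), gapCondition_replicate_append h1]
      exact fun i j _ _ => by simp
    · obtain ⟨-, hlt, -, hgap⟩ := aValid_iff.1 hl
      refine ⟨by simp; omega, ?_, ?_⟩
      · simp only [List.rightpad, List.mem_append, List.mem_replicate]
        rintro x (hx | ⟨-, rfl⟩)
        exacts [hlt x hx, by omega]
      · rwa [List.rightpad, gapCondition_append_replicate]

lemma finite_validUpTo (hΛ : 1 < Lam lam k) (h1 : 1 ≤ lam 1) (t : ℕ) :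
    (validUpTo lam k t).Finite := by
  refine Set.Finite.of_finite_image ?_ ((injOn_rightpad t).mono fun _ hl => hl.1)
  exact (gapWords hΛ t).finite_toSet.subset
    (coe_gapWords hΛ h1 t ▸ Set.subset_insert _ _)

lemma ncard_validUpTo (hΛ : 1 < Lam lam k) (h1 : 1 ≤ lam 1) {a : ℤ → ℤ}
    (ha0 : ∀ i : ℤ, i ≤ 0 → a i = 1)
    (harec : ∀ n : ℤ, 1 ≤ n → a n = ∑ i ∈ Icc 1 k, (lam i : ℤ) * a (n - i))
    (t : ℕ) :
    ((validUpTo lam k t).ncard : ℤ) = a t - 1 := by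
  have hcard := congrArg Set.ncard (coe_gapWords hΛ h1 t)
  rw [Set.ncard_coe_finset, Set.ncard_insert_of_notMem (replicate_notMem_image_rightpad t)
      ((finite_validUpTo hΛ h1 t).image _),
    ((injOn_rightpad t).mono fun _ hl => hl.1).ncard_image] at hcard
  rw [← card_gapWords hΛ h1 ha0 harec t, hcard]
  push_cast
  ring

end ValidUpTo

section Predecessors

variable {lam : ℕ → ℕ} {k : ℕ} {l : List ℕ}

lemma validUpTo_length_sub_one_subset (hl : AValid lam k l) :
    validUpTo lam k (l.length - 1) ⊆ {l' | AValid lam k l' ∧ ZOrd l' l} := by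
  have := List.length_pos_iff.2 hl.1
  rintro l' ⟨hl', hlen⟩
  exact ⟨hl', Or.inl (by omega)⟩

lemma setOf_zOrd_ssubset_validUpTo (hl : AValid lam k l) :
    {l' | AValid lam k l' ∧ ZOrd l' l} ⊂ validUpTo lam k l.length := by
  refine (Set.ssubset_iff_of_subset ?_).2 ⟨l, mem_validUpTo.2 ⟨hl, le_rfl⟩, ?_⟩
  · rintro l' ⟨hl', h | ⟨h, -⟩⟩ <;> exact mem_validUpTo.2 ⟨hl', by omega⟩
  · rintro ⟨-, h | ⟨-, h⟩⟩
    exacts [lt_irrefl _ h, List.lex_irrefl (fun _ => lt_irrefl _) _ h]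

end Predecessors

/-- `a_t - 1` counts the valid sequences of at most `t` digits, which grow with `t`. -/
lemma monotone_of_recurrence {lam : ℕ → ℕ} {k : ℕ} (hΛ : 1 < Lam lam k) (h1 : 1 ≤ lam 1)
    {a : ℤ → ℤ} (ha0 : ∀ i : ℤ, i ≤ 0 → a i = 1)
    (harec : ∀ n : ℤ, 1 ≤ n → a n = ∑ i ∈ Icc 1 k, (lam i : ℤ) * a (n - i)) :
    Monotone fun n : ℕ => a n := by
  intro s t hst
  have := Set.ncard_le_ncard (validUpTo_mono hst) (finite_validUpTo hΛ h1 t)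
  have := ncard_validUpTo hΛ h1 ha0 harec s
  have := ncard_validUpTo hΛ h1 ha0 harec t
  simp only
  omega

theorem stmt3_general (k : ℕ) (lam : ℕ → ℕ)
    (h1 : 1 ≤ lam 1)
    (hΛ : 2 ≤ Lam lam k)
    (a : ℤ → ℤ)
    (ha0 : ∀ i : ℤ, i ≤ 0 → a i = 1)
    (harec : ∀ n : ℤ, 1 ≤ n → a n = ∑ i ∈ Finset.Icc 1 k, (lam i : ℤ) * a (n - i)) :
    ∀ N : ℕ, 1 ≤ N → ∀ t : ℕ, a t ≤ (N : ℤ) → (N : ℤ) < a (t + 1) →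
      ∀ l : List ℕ, AValid lam k l →
        Set.ncard {l' : List ℕ | AValid lam k l' ∧ ZOrd l' l} = N - 1 →
        l.length = t + 1 := by
  intro N hN t hat hat' l hl hcard
  have hL : 0 < l.length := List.length_pos_iff.2 hl.1
  have hcount := ncard_validUpTo hΛ h1 ha0 harec
  have hmono := monotone_of_recurrence hΛ h1 ha0 harec
  have hfin := finite_validUpTo hΛ h1 l.length
  have hlow : a (l.length - 1 : ℕ) ≤ N := by
    have := Set.ncard_le_ncard (validUpTo_length_sub_one_subset hl)
      (hfin.subset (setOf_zOrd_ssubset_validUpTo hl).subset)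
    have := hcount (l.length - 1)
    omega
  have hup : (N : ℤ) < a l.length := by
    have := Set.ncard_lt_ncard (setOf_zOrd_ssubset_validUpTo hl) hfin
    have := hcount l.length
    omega
  have hlt : t < l.length := by
    by_contra! h
    linarith [hmono h]
  have hle : l.length - 1 ≤ t := by
    by_contra! h
    have := hmono (show t + 1 ≤ l.length - 1 by omega)
    push_cast at this
    linarith
  omega

/-- the `a`-Zeckendorf representation of `N` (the `N`-th
`a`-valid sequence in length-then-lexicographic order, i.e. the valid
sequence with exactly `N - 1` predecessors) has exactly `t + 1` digits,
where `t` is determined by `a_t ≤ N < a_{t+1}`. -/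
theorem stmt3 (k : ℕ) (lam : ℕ → ℕ) (hk : 1 ≤ k)
    (h1 : 1 ≤ lam 1) (hkpos : 1 ≤ lam k) (hzero : ∀ i, k < i → lam i = 0)
    (hΛ : 2 ≤ Lam lam k)
    (a : ℤ → ℤ)
    (ha0 : ∀ i : ℤ, i ≤ 0 → a i = 1)
    (harec : ∀ n : ℤ, 1 ≤ n → a n = ∑ i ∈ Finset.Icc 1 k, (lam i : ℤ) * a (n - i)) :
    ∀ N : ℕ, 1 ≤ N → ∀ t : ℕ, a t ≤ (N : ℤ) → (N : ℤ) < a (t + 1) →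
      ∀ l : List ℕ, AValid lam k l →
        Set.ncard {l' : List ℕ | AValid lam k l' ∧ ZOrd l' l} = N - 1 →
        l.length = t + 1 :=
  stmt3_general k lam h1 hΛ a ha0 harec
end

section
/- Let k > 1 and Λ = Σ λ_i ≥ 3, with λ₁ > 0, λ_k > 0. Then the a-Zeckendorf representation system is not a place value system: there is no sequence of place values c_0 < c_1 < ⋯ with c_0 = 1 such that every positive integer N with a-Zeckendorf representation d_M,…,d_0 satisfies N = Σ_{i=0}^M d_i c_i. Concretely, the number whose a-Zeckendorf representation is the two-digit string "2 0" is not equal to 2·a_1. -/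
section Zeckendorf

variable {k : ℕ} {lam : ℕ → ℕ}

lemma Lam_zero : Lam lam 0 = 0 := by simp [Lam]

lemma Lam_one : Lam lam 1 = lam 1 := by simp [Lam]

lemma lam_one_lt_Lam (hk : 1 < k) (hkpos : 1 ≤ lam k) : lam 1 < Lam lam k := by
  have hpair : ({1, k} : Finset ℕ) ⊆ Finset.Icc 1 k := by
    intro i hi
    simp only [Finset.mem_insert, Finset.mem_singleton] at hi
    rcases hi with rfl | rfl <;> simp <;> omega
  calc lam 1 < lam 1 + lam k := by omega
    _ = ∑ i ∈ ({1, k} : Finset ℕ), lam i := (Finset.sum_pair (by omega)).symm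
    _ ≤ Lam lam k := Finset.sum_le_sum_of_subset hpair

lemma lam_one_le_Lam (hk : 1 ≤ k) : lam 1 ≤ Lam lam k :=
  Finset.single_le_sum (fun i _ => Nat.zero_le (lam i)) (by simpa using hk)

lemma mu_le_one_iff {d : ℕ} (hd : d < Lam lam k) : mu lam d ≤ 1 ↔ d < lam 1 := by
  constructor
  · intro hmu
    have hmem : d < Lam lam (mu lam d) := Nat.sInf_mem (⟨k, hd⟩ : Set.Nonempty {j | d < Lam lam j})
    interval_cases h : mu lam d
    · simp [Lam_zero] at hmem
    · rwa [Lam_one] at hmem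
  · intro hd₁
    exact Nat.sInf_le (show d < Lam lam 1 by rwa [Lam_one])

lemma aValid_singleton_iff {d : ℕ} : AValid lam k [d] ↔ 1 ≤ d ∧ d < Lam lam k := by
  constructor
  · rintro ⟨-, hlt, hlast, -⟩
    exact ⟨Nat.one_le_iff_ne_zero.mpr (by simpa using hlast), hlt d (by simp)⟩
  · rintro ⟨hd, hdΛ⟩
    refine ⟨by simp, by simpa using hdΛ, by simp; omega, ?_⟩
    intro i j hij _ hj
    simp only [List.length_singleton] at hj
    omega

lemma aValid_pair_iff {d b : ℕ} (hb : 1 ≤ b) (hbΛ : b < Lam lam k) :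
    AValid lam k [d, b] ↔ d < lam 1 := by
  constructor
  · rintro ⟨-, hlt, -, hzero⟩
    have hdΛ : d < Lam lam k := hlt d (by simp)
    by_contra hd
    have hmu : 1 < mu lam d := by
      have := (mu_le_one_iff hdΛ).not.mpr hd
      omega
    have := hzero 0 1 one_pos (by simpa using hmu) (by simp)
    simp only [List.getD_cons_succ, List.getD_cons_zero] at this
    omega
  · intro hd
    have hk : 1 ≤ k := Nat.one_le_iff_ne_zero.mpr (by rintro rfl; simp [Lam_zero] at hbΛ)
    have hdΛ : d < Lam lam k := hd.trans_le (lam_one_le_Lam hk)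
    have hmu : mu lam d ≤ 1 := (mu_le_one_iff hdΛ).mpr hd
    refine ⟨by simp, ?_, by simp; omega, ?_⟩
    · intro x hx
      simp only [List.mem_cons, List.not_mem_nil, or_false] at hx
      rcases hx with rfl | rfl <;> omega
    · intro i j hij hji hj
      simp only [List.length_cons, List.length_nil] at hj
      obtain rfl : i = 0 := by omega
      simp only [List.getD_cons_zero] at hji
      omega

lemma zOrd_pair_iff {l : List ℕ} {y₀ y₁ : ℕ} :
    ZOrd l [y₀, y₁] ↔
      l.length < 2 ∨ ∃ x₀ x₁, l = [x₀, x₁] ∧ (x₁ < y₁ ∨ x₁ = y₁ ∧ x₀ < y₀) := by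
  unfold ZOrd
  constructor
  · rintro (hlen | ⟨hlen, hlex⟩)
    · exact Or.inl (by simpa using hlen)
    · obtain ⟨x₀, x₁, rfl⟩ := List.length_eq_two.mp (by simpa using hlen)
      simp only [List.reverse_cons, List.reverse_nil, List.nil_append, List.cons_append,
        List.cons_lex_cons_iff, List.not_lex_nil, and_false, or_false] at hlex
      exact Or.inr ⟨x₀, x₁, rfl, hlex⟩
  · rintro (hlen | ⟨x₀, x₁, rfl, hlt⟩)
    · exact Or.inl (by simpa using hlen)
    · refine Or.inr ⟨rfl, ?_⟩
      simpa only [List.reverse_cons, List.reverse_nil, List.nil_append, List.cons_append,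
        List.cons_lex_cons_iff, List.not_lex_nil, and_false, or_false] using hlt

lemma setOf_aValid_zOrd_pair_eq {b : ℕ} (hb : b ≤ Lam lam k) :
    {l | AValid lam k l ∧ ZOrd l [0, b]} =
      ↑((Finset.Ico 1 (Lam lam k)).image (fun d => [d]) ∪
        (Finset.range (lam 1) ×ˢ Finset.Ico 1 b).image (fun p => [p.1, p.2])) := by
  ext l
  simp only [Set.mem_ofPred_eq, zOrd_pair_iff, Finset.coe_union, Finset.coe_image,
    Set.mem_union, Set.mem_image, Finset.mem_coe, Finset.mem_Ico, Finset.mem_product,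
    Finset.mem_range, Prod.exists, not_lt_zero, and_false, or_false]
  constructor
  · rintro ⟨hv, hlen | ⟨d, b', rfl, hb'⟩⟩
    · obtain ⟨d, rfl⟩ : ∃ d, l = [d] :=
        List.length_eq_one_iff.mp (by have := List.length_pos_iff.mpr hv.1; omega)
      exact Or.inl ⟨d, aValid_singleton_iff.mp hv, rfl⟩
    · have hb'₀ : b' ≠ 0 := by simpa using hv.2.2.1
      have hd := (aValid_pair_iff (by omega) (by omega)).mp hv
      exact Or.inr ⟨d, b', ⟨hd, by omega, hb'⟩, rfl⟩
  · rintro (⟨d, hd, rfl⟩ | ⟨d, b', ⟨hd, hb'₁, hb'⟩, rfl⟩)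
    · exact ⟨aValid_singleton_iff.mpr hd, Or.inl (by simp)⟩
    · exact ⟨(aValid_pair_iff hb'₁ (by omega)).mpr hd, Or.inr ⟨d, b', rfl, hb'⟩⟩

lemma ncard_setOf_aValid_zOrd_pair {b : ℕ} (hb : b ≤ Lam lam k) :
    {l | AValid lam k l ∧ ZOrd l [0, b]}.ncard = Lam lam k - 1 + lam 1 * (b - 1) := by
  rw [setOf_aValid_zOrd_pair_eq hb, Set.ncard_coe_finset, Finset.card_union_of_disjoint,
    Finset.card_image_of_injective _ (fun _ _ h => List.singleton_injective h),
    Finset.card_image_of_injective _ (fun p q h => by simpa [Prod.ext_iff] using h)]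
  · simp
  · simp only [Finset.disjoint_left, Finset.mem_image]
    rintro _ ⟨d, -, rfl⟩ ⟨p, -, h⟩
    simp at h

end Zeckendorf

lemma apply_one_eq_Lam {k : ℕ} {lam : ℕ → ℕ} {a : ℤ → ℤ} (ha0 : ∀ i : ℤ, i ≤ 0 → a i = 1)
    (harec : ∀ n : ℤ, 1 ≤ n → a n = ∑ i ∈ Finset.Icc 1 k, (lam i : ℤ) * a (n - i)) :
    a 1 = Lam lam k := by
  rw [harec 1 le_rfl, Lam, Nat.cast_sum]
  refine Finset.sum_congr rfl fun i hi => ?_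
  rw [ha0 _ (by simp at hi; omega), mul_one]

theorem stmt14_general (k : ℕ) (lam : ℕ → ℕ) (hk : 1 < k)
    (h1 : 1 ≤ lam 1) (hkpos : 1 ≤ lam k)
    (hΛ : 3 ≤ Lam lam k)
    (a : ℤ → ℤ)
    (ha0 : ∀ i : ℤ, i ≤ 0 → a i = 1)
    (harec : ∀ n : ℤ, 1 ≤ n → a n = ∑ i ∈ Finset.Icc 1 k, (lam i : ℤ) * a (n - i)) :
    (¬ ∃ c : ℕ → ℤ, StrictMono c ∧ c 0 = 1 ∧
      ∀ (N : ℕ) (l : List ℕ), 1 ≤ N → AValid lam k l →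
        Set.ncard {l' : List ℕ | AValid lam k l' ∧ ZOrd l' l} = N - 1 →
        (N : ℤ) = ∑ i ∈ Finset.range l.length, (l.getD i 0 : ℤ) * c i) ∧
    ∀ N : ℕ, 1 ≤ N →
      Set.ncard {l' : List ℕ | AValid lam k l' ∧ ZOrd l' [0, 2]} = N - 1 →
      (N : ℤ) ≠ 2 * a 1 := by
  have hlt := lam_one_lt_Lam hk hkpos
  have hcard₁ := ncard_setOf_aValid_zOrd_pair (k := k) (lam := lam) (b := 1) (by omega)
  have hcard₂ := ncard_setOf_aValid_zOrd_pair (k := k) (lam := lam) (b := 2) (by omega)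
  refine ⟨?_, fun N hN hcard => ?_⟩
  · rintro ⟨c, -, -, hc⟩
    have hc₁ := hc (Lam lam k) [0, 1] (by omega)
      ((aValid_pair_iff le_rfl (by omega)).mpr (by omega)) (by omega)
    have hc₂ := hc (Lam lam k + lam 1) [0, 2] (by omega)
      ((aValid_pair_iff (by omega) (by omega)).mpr (by omega)) (by omega)
    norm_num [Finset.sum_range_succ] at hc₁ hc₂
    omega
  · rw [apply_one_eq_Lam ha0 harec]
    omega

/-- if `k > 1` and `Λ ≥ 3`, then the `a`-Zeckendorf system is
not a place value system: there is no strictly increasing sequence of place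
values `c_0 = 1 < c_1 < ⋯` such that the `N`-th `a`-valid sequence
`d_M, …, d_0` always satisfies `N = ∑ d_i c_i`.  Concretely, the number whose
`a`-Zeckendorf representation is the two-digit string `"2 0"` (the list
`[0, 2]`, least significant digit first) is not equal to `2·a_1`. -/
theorem stmt14 (k : ℕ) (lam : ℕ → ℕ) (hk : 1 < k)
    (h1 : 1 ≤ lam 1) (hkpos : 1 ≤ lam k) (hzero : ∀ i, k < i → lam i = 0)
    (hΛ : 3 ≤ Lam lam k)
    (a : ℤ → ℤ)
    (ha0 : ∀ i : ℤ, i ≤ 0 → a i = 1)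
    (harec : ∀ n : ℤ, 1 ≤ n → a n = ∑ i ∈ Finset.Icc 1 k, (lam i : ℤ) * a (n - i)) :
    (¬ ∃ c : ℕ → ℤ, StrictMono c ∧ c 0 = 1 ∧
      ∀ (N : ℕ) (l : List ℕ), 1 ≤ N → AValid lam k l →
        Set.ncard {l' : List ℕ | AValid lam k l' ∧ ZOrd l' l} = N - 1 →
        (N : ℤ) = ∑ i ∈ Finset.range l.length, (l.getD i 0 : ℤ) * c i) ∧
    ∀ N : ℕ, 1 ≤ N →
      Set.ncard {l' : List ℕ | AValid lam k l' ∧ ZOrd l' [0, 2]} = N - 1 →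
      (N : ℤ) ≠ 2 * a 1 :=
  stmt14_general k lam hk h1 hkpos hΛ a ha0 harec
end

section
/- Let a = ⟨λ₁,…,λ_k⟩ be as above with dominant root κ, and suppose a_n = B κ^n + o(κ^n) with B > 0. Fix a nonnegative integer c, and let L(j,t) be as above. Then there is a constant B_c > 0 such that L(t+c, t) = B_c κ^t + o(κ^t) as t → ∞, where B_c = B(κ−1)/(Λ−1) if c = 0, B_c = B if c ≥ k, and B_c = (1/(Λ−1))·((Λ_c − 1)B + Σ_{i=c+1}^{k} λ_i B κ^{c+1−i}) if 1 ≤ c < k. -/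
/-! The defining identity of `L` expresses `(Λ - 1) L(t + c, t)` through finitely many values
`a_{t+m}` with fixed shifts `m ∈ {0, …, c + 1}`, each of which is `B κ^m κ^t + o(κ^t)`.
The resulting limit `B κ^{c+1} + (Λ_c - 1) B - ∑_{i ≤ c} λ_i B κ^{c+1-i}` is brought to the
stated form with the characteristic equation `κ^{c+1} = ∑_{i=1}^k λ_i κ^{c+1-i}`. -/

open Filter

open Finset Topology

theorem sum_Icc_eq_sum_Icc_of_eq_zero {M : Type*} [AddCommMonoid M] {f : ℕ → M}
    {a k n : ℕ} (hkn : k ≤ n) (hf : ∀ i, k < i → f i = 0) :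
    ∑ i ∈ Icc a n, f i = ∑ i ∈ Icc a k, f i := by
  refine (sum_subset (Icc_subset_Icc_right hkn) fun i hi hik => hf i ?_).symm
  simp only [mem_Icc, not_and, not_le] at hi hik
  exact hik hi.1

theorem sum_Icc_one_add_sum_Icc_succ {M : Type*} [AddCommMonoid M] (f : ℕ → M) {c k : ℕ}
    (hck : c ≤ k) :
    ∑ i ∈ Icc 1 c, f i + ∑ i ∈ Icc (c + 1) k, f i = ∑ i ∈ Icc 1 k, f i := by
  simpa only [← Icc_add_one_left_eq_Ioc, zero_add] using sum_Ioc_consecutive f c.zero_le hck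

section CharacteristicRoot

variable {K : Type*} [Field K] {κ : K} {μ : ℕ → K} {k : ℕ}

theorem zpow_eq_sum_of_pow_eq_sum (hκ : κ ≠ 0)
    (hroot : κ ^ k = ∑ i ∈ Icc 1 k, μ i * κ ^ (k - i)) (m : ℤ) :
    κ ^ m = ∑ i ∈ Icc 1 k, μ i * κ ^ (m - i) := by
  have hk : κ ^ (k : ℤ) = ∑ i ∈ Icc 1 k, μ i * κ ^ ((k : ℤ) - i) := by
    rw [zpow_natCast, hroot]
    refine sum_congr rfl fun i hi => ?_
    rw [← zpow_natCast, Nat.cast_sub (mem_Icc.mp hi).2]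
  calc κ ^ m = κ ^ (k : ℤ) * κ ^ (m - k) := by rw [← zpow_add₀ hκ, add_sub_cancel]
    _ = ∑ i ∈ Icc 1 k, μ i * κ ^ (m - i) := by
      rw [hk, sum_mul]
      refine sum_congr rfl fun i _ => ?_
      rw [mul_assoc, ← zpow_add₀ hκ]
      ring_nf

theorem zpow_sub_sum_eq_sum_Icc_succ (hκ : κ ≠ 0) (hzero : ∀ i, k < i → μ i = 0)
    (hroot : κ ^ k = ∑ i ∈ Icc 1 k, μ i * κ ^ (k - i)) (c : ℕ) :
    κ ^ ((c : ℤ) + 1) - ∑ i ∈ Icc 1 c, μ i * κ ^ ((c : ℤ) + 1 - i)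
      = ∑ i ∈ Icc (c + 1) k, μ i * κ ^ ((c : ℤ) + 1 - i) := by
  rw [zpow_eq_sum_of_pow_eq_sum hκ hroot]
  rcases le_total c k with hck | hkc
  · rw [← sum_Icc_one_add_sum_Icc_succ _ hck, add_sub_cancel_left]
  · rw [Icc_eq_empty_of_lt (Nat.lt_succ_of_le hkc), sum_empty,
      sum_Icc_eq_sum_Icc_of_eq_zero hkc fun i hi => by rw [hzero i hi, zero_mul], sub_self]

end CharacteristicRoot

theorem tendsto_shift_div_pow {a : ℤ → ℝ} {κ B : ℝ} (hκ : κ ≠ 0)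
    (hasym : Tendsto (fun n : ℕ => a n / κ ^ n) atTop (𝓝 B)) {m : ℤ} (hm : 0 ≤ m) :
    Tendsto (fun t : ℕ => a (t + m) / κ ^ t) atTop (𝓝 (B * κ ^ m)) := by
  lift m to ℕ using hm
  refine ((hasym.comp (tendsto_add_atTop_nat m)).mul_const (κ ^ m)).congr fun t => ?_
  simp only [Function.comp_apply, Nat.cast_add, pow_add]
  field_simp

/-- The paper's `B_c` for `1 ≤ c < k`; this formula is in fact valid for every `c`. -/
noncomputable def leafConst (lam : ℕ → ℕ) (k : ℕ) (κ B : ℝ) (c : ℕ) : ℝ :=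
  (1 / ((Lam lam k : ℝ) - 1)) *
    (((Lam lam c : ℝ) - 1) * B +
      ∑ i ∈ Icc (c + 1) k, (lam i : ℝ) * B * κ ^ ((c : ℤ) + 1 - i))

section LeafCount

variable {k : ℕ} {lam : ℕ → ℕ} {κ B : ℝ}

theorem one_le_Lam (h1 : 1 ≤ lam 1) {c : ℕ} (hc : 1 ≤ c) : 1 ≤ Lam lam c :=
  h1.trans (single_le_sum (f := lam) (fun _ _ => Nat.zero_le _) (mem_Icc.mpr ⟨le_rfl, hc⟩))

theorem Lam_eq_of_le (hzero : ∀ i, k < i → lam i = 0) {c : ℕ} (hkc : k ≤ c) :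
    Lam lam c = Lam lam k :=
  sum_Icc_eq_sum_Icc_of_eq_zero hkc hzero

theorem leafConst_eq (hκ : κ ≠ 0) (hzero : ∀ i, k < i → lam i = 0)
    (hroot : κ ^ k = ∑ i ∈ Icc 1 k, (lam i : ℝ) * κ ^ (k - i)) (c : ℕ) :
    leafConst lam k κ B c = (1 / ((Lam lam k : ℝ) - 1)) *
      (B * κ ^ ((c : ℤ) + 1) + ((Lam lam c : ℝ) - 1) * B
        - ∑ i ∈ Icc 1 c, (lam i : ℝ) * (B * κ ^ ((c : ℤ) + 1 - i))) := by
  have htail := zpow_sub_sum_eq_sum_Icc_succ hκ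
    (fun i hi => by rw [hzero i hi, Nat.cast_zero]) hroot c
  simp only [leafConst, mul_left_comm _ B, ← mul_sum, mul_assoc, ← htail]
  ring

theorem tendsto_leaf_div_pow (hκ : κ ≠ 0) (hzero : ∀ i, k < i → lam i = 0)
    (hroot : κ ^ k = ∑ i ∈ Icc 1 k, (lam i : ℝ) * κ ^ (k - i))
    {a : ℤ → ℝ} (hasym : Tendsto (fun n : ℕ => a n / κ ^ n) atTop (𝓝 B))
    {L : ℕ → ℕ → ℝ}
    (hL : ∀ j t : ℕ, t ≤ j →
      ((Lam lam k : ℝ) - 1) * L j t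
        = a (j + 1) + ((Lam lam (j - t) : ℝ) - 1) * a t
          - ∑ i ∈ Icc 1 (j - t), (lam i : ℝ) * a ((j : ℤ) + 1 - i))
    (hΛ : (Lam lam k : ℝ) ≠ 1) (c : ℕ) :
    Tendsto (fun t : ℕ => L (t + c) t / κ ^ t) atTop (𝓝 (leafConst lam k κ B c)) := by
  have hshift (m : ℤ) (hm : 0 ≤ m) (n : ℕ → ℤ) (hn : ∀ t : ℕ, n t = t + m) :
      Tendsto (fun t : ℕ => a (n t) / κ ^ t) atTop (𝓝 (B * κ ^ m)) := by
    simpa only [hn] using tendsto_shift_div_pow hκ hasym hm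
  have hlim := (((hshift ((c : ℤ) + 1) (by positivity) (fun t => ((t + c : ℕ) : ℤ) + 1)
      fun t => by push_cast; ring).add (hasym.const_mul ((Lam lam c : ℝ) - 1))).sub
    (tendsto_finsetSum (Icc 1 c) fun i hi =>
      (hshift ((c : ℤ) + 1 - i) (by have := (mem_Icc.mp hi).2; omega)
        (fun t => ((t + c : ℕ) : ℤ) + 1 - i) fun t => by push_cast; ring).const_mul
        (lam i : ℝ))).const_mul (1 / ((Lam lam k : ℝ) - 1))
  rw [leafConst_eq hκ hzero hroot]
  refine hlim.congr fun t => ?_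
  have h := hL (t + c) t (Nat.le_add_right t c)
  rw [Nat.add_sub_cancel_left] at h
  simp only [mul_div_assoc', ← sum_div, ← add_div, ← sub_div, ← h]
  field_simp [sub_ne_zero.mpr hΛ]

theorem leafConst_zero (hκ : κ ≠ 0) (hzero : ∀ i, k < i → lam i = 0)
    (hroot : κ ^ k = ∑ i ∈ Icc 1 k, (lam i : ℝ) * κ ^ (k - i)) :
    leafConst lam k κ B 0 = B * (κ - 1) / ((Lam lam k : ℝ) - 1) := by
  rw [leafConst_eq hκ hzero hroot]
  simp only [Lam, Icc_eq_empty_of_lt zero_lt_one, sum_empty, Nat.cast_zero, zero_add, zpow_one]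
  ring

theorem leafConst_of_le (hzero : ∀ i, k < i → lam i = 0) (hΛ : (Lam lam k : ℝ) ≠ 1)
    {c : ℕ} (hkc : k ≤ c) : leafConst lam k κ B c = B := by
  rw [leafConst, Lam_eq_of_le hzero hkc, Icc_eq_empty (by omega), sum_empty, add_zero]
  field_simp [sub_ne_zero.mpr hΛ]

theorem leafConst_pos_of_lt (h1 : 1 ≤ lam 1) (hkpos : 1 ≤ lam k) (hκ : 0 < κ) (hB : 0 < B)
    (hΛ : 1 < (Lam lam k : ℝ)) {c : ℕ} (hc : 1 ≤ c) (hck : c < k) :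
    0 < leafConst lam k κ B c := by
  have hΛc : (1 : ℝ) ≤ Lam lam c := by exact_mod_cast one_le_Lam h1 hc
  have hlamk : (0 : ℝ) < lam k := by exact_mod_cast hkpos
  have htail : 0 < ∑ i ∈ Icc (c + 1) k, (lam i : ℝ) * B * κ ^ ((c : ℤ) + 1 - i) :=
    sum_pos' (fun i _ => by positivity) ⟨k, mem_Icc.mpr ⟨hck, le_rfl⟩, by positivity⟩
  have hhead : 0 ≤ ((Lam lam c : ℝ) - 1) * B := mul_nonneg (by linarith) hB.le
  exact mul_pos (one_div_pos.mpr (by linarith)) (by linarith)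

end LeafCount

theorem stmt18_general (k : ℕ) (lam : ℕ → ℕ)
    (h1 : 1 ≤ lam 1) (hkpos : 1 ≤ lam k) (hzero : ∀ i, k < i → lam i = 0)
    (hΛ : 2 ≤ Lam lam k)
    (a : ℤ → ℝ)
    (κ : ℝ) (hκ : 1 < κ)
    (hroot : κ ^ k = ∑ i ∈ Finset.Icc 1 k, (lam i : ℝ) * κ ^ (k - i))
    (B : ℝ) (hB : 0 < B)
    (hasym : Tendsto (fun n : ℕ => a n / κ ^ n) atTop (nhds B))
    (L : ℕ → ℕ → ℝ)
    (hL : ∀ j t : ℕ, t ≤ j →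
      ((Lam lam k : ℝ) - 1) * L j t
        = a (j + 1) + ((Lam lam (j - t) : ℝ) - 1) * a t
          - ∑ i ∈ Finset.Icc 1 (j - t), (lam i : ℝ) * a ((j : ℤ) + 1 - i))
    (c : ℕ) :
    ∃ Bc : ℝ,
      Bc = (if c = 0 then B * (κ - 1) / ((Lam lam k : ℝ) - 1)
            else if k ≤ c then B
            else (1 / ((Lam lam k : ℝ) - 1)) *
              (((Lam lam c : ℝ) - 1) * B +
                ∑ i ∈ Finset.Icc (c + 1) k, (lam i : ℝ) * B * κ ^ ((c : ℤ) + 1 - i))) ∧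
      0 < Bc ∧
      Tendsto (fun t : ℕ => L (t + c) t / κ ^ t) atTop (nhds Bc) := by
  have hκ0 : κ ≠ 0 := (zero_lt_one.trans hκ).ne'
  have hΛ1 : (1 : ℝ) < Lam lam k := by exact_mod_cast hΛ
  refine ⟨leafConst lam k κ B c, ?_, ?_, tendsto_leaf_div_pow hκ0 hzero hroot hasym hL hΛ1.ne' c⟩
  · split_ifs with hc0 hkc
    · rw [hc0, leafConst_zero hκ0 hzero hroot]
    · exact leafConst_of_le hzero hΛ1.ne' hkc
    · rfl
  · rcases Nat.eq_zero_or_pos c with rfl | hc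
    · rw [leafConst_zero hκ0 hzero hroot]
      exact div_pos (mul_pos hB (by linarith)) (by linarith)
    rcases lt_or_ge c k with hck | hkc
    · exact leafConst_pos_of_lt h1 hkpos (by linarith) hB hΛ1 hc hck
    · rw [leafConst_of_le hzero hΛ1.ne' hkc]
      exact hB

/-- with `κ` the dominant root, `a_n = B κ^n + o(κ^n)` with
`B > 0`, and `L(j,t)` the leaf count satisfying
`(Λ-1) L(j,t) = a_{j+1} + (Λ_{j-t} - 1) a_t - ∑_{i=1}^{j-t} λ_i a_{j+1-i}`,
for each fixed `c ≥ 0` there is a constant `B_c > 0` with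
`L(t+c, t) = B_c κ^t + o(κ^t)`, where `B_c = B(κ-1)/(Λ-1)` if `c = 0`,
`B_c = B` if `c ≥ k`, and
`B_c = (1/(Λ-1))((Λ_c - 1)B + ∑_{i=c+1}^k λ_i B κ^{c+1-i})` if `1 ≤ c < k`. -/
theorem stmt18 (k : ℕ) (lam : ℕ → ℕ) (hk : 1 ≤ k)
    (h1 : 1 ≤ lam 1) (hkpos : 1 ≤ lam k) (hzero : ∀ i, k < i → lam i = 0)
    (hΛ : 2 ≤ Lam lam k)
    (a : ℤ → ℝ)
    (ha0 : ∀ i : ℤ, i ≤ 0 → a i = 1)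
    (harec : ∀ n : ℤ, 1 ≤ n → a n = ∑ i ∈ Finset.Icc 1 k, (lam i : ℝ) * a (n - i))
    (κ : ℝ) (hκ : 1 < κ)
    (hroot : κ ^ k = ∑ i ∈ Finset.Icc 1 k, (lam i : ℝ) * κ ^ (k - i))
    (B : ℝ) (hB : 0 < B)
    (hasym : Tendsto (fun n : ℕ => a n / κ ^ n) atTop (nhds B))
    (L : ℕ → ℕ → ℝ)
    (hL : ∀ j t : ℕ, t ≤ j →
      ((Lam lam k : ℝ) - 1) * L j t
        = a (j + 1) + ((Lam lam (j - t) : ℝ) - 1) * a t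
          - ∑ i ∈ Finset.Icc 1 (j - t), (lam i : ℝ) * a ((j : ℤ) + 1 - i))
    (c : ℕ) :
    ∃ Bc : ℝ,
      Bc = (if c = 0 then B * (κ - 1) / ((Lam lam k : ℝ) - 1)
            else if k ≤ c then B
            else (1 / ((Lam lam k : ℝ) - 1)) *
              (((Lam lam c : ℝ) - 1) * B +
                ∑ i ∈ Finset.Icc (c + 1) k, (lam i : ℝ) * B * κ ^ ((c : ℤ) + 1 - i))) ∧
      0 < Bc ∧
      Tendsto (fun t : ℕ => L (t + c) t / κ ^ t) atTop (nhds Bc) :=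
  stmt18_general k lam h1 hkpos hzero hΛ a κ hκ hroot B hB hasym L hL c
end
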